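/- Define, for a pair of partitions (λ, μ), t_{λ,μ} = (s - s⁻¹)·(−v·Σ_{cells∈λ} s^{−2(content)} + v⁻¹·Σ_{cells∈μ} s^{2(content)}) + δ in ℚ(s,v), where δ = (v⁻¹ − v)/(s − s⁻¹). Then the map (λ,μ) ↦ t_{λ,μ} is injective: t_{λ,μ} = t_{λ',μ'} implies λ = λ' and μ = μ'. -/

import Mathlib

noncomputable section

abbrev F : Type := FractionRing (MvPolynomial (Fin 2) ℚ)

def s : F := algebraMap (MvPolynomial (Fin 2) ℚ) F (MvPolynomial.X 0)
def v : F := algebraMap (MvPolynomial (Fin 2) ℚ) F (MvPolynomial.X 1)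

def δ : F := (v⁻¹ - v) / (s - s⁻¹)

/-- `t_{λ,μ} = (s-s⁻¹)(−v Σ_{c∈λ} s^{−2 content(c)} + v⁻¹ Σ_{c∈μ} s^{2 content(c)}) + δ`. -/
def tpair (γ μ : YoungDiagram) : F :=
  (s - s⁻¹) * (-v * (∑ c ∈ γ.cells, s ^ (-2 * ((c.2 : ℤ) - (c.1 : ℤ))))
      + v⁻¹ * (∑ c ∈ μ.cells, s ^ (2 * ((c.2 : ℤ) - (c.1 : ℤ))))) + δ

/-! Multiplying by `v` and cancelling `s - s⁻¹`, the equation `t_{λ,μ} = t_{λ',μ'}` becomes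
`v² (A_λ - A_λ') = B_μ - B_μ'`, where `A_λ = Σ s^(-2 content)` and `B_μ = Σ s^(2 content)` are
Laurent polynomials in `s`. As `s` and `v` are independent indeterminates, both sides vanish, so
`λ, λ'` (and `μ, μ'`) have the same number of cells of each content. A Young diagram is determined
by these numbers: the cells of a given content form an initial segment of their diagonal. -/

open Finset LaurentPolynomial Polynomial

theorem Finset.mem_iff_lt_card_of_isLowerSet {t : Finset ℕ} (ht : IsLowerSet (t : Set ℕ)) (m : ℕ) :
    m ∈ t ↔ m < #t := by
  rcases ht.eq_univ_or_Iio with huniv | ⟨a, ha⟩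
  · exact absurd (huniv ▸ t.finite_toSet) Set.infinite_univ
  · have : t = range a := coe_injective (by rw [ha, coe_range])
    simp [this]

namespace YoungDiagram

def content (c : ℕ × ℕ) : ℤ := c.2 - c.1

variable (d : YoungDiagram)

/-- `min c.1 c.2` maps the cells of content `j - i` bijectively onto an initial segment of `ℕ`. -/
theorem mem_iff_min_lt_card_content (i j : ℕ) :
    (i, j) ∈ d ↔ min i j < #{c ∈ d.cells | content c = j - i} := by
  have hinj : Set.InjOn (fun c : ℕ × ℕ ↦ min c.1 c.2)
      ({c ∈ d.cells | content c = j - i} : Finset (ℕ × ℕ)) := by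
    intro c hc c' hc' heq
    simp only [mem_coe, mem_filter] at hc hc'
    simp only [content] at hc hc'
    dsimp only at heq
    ext <;> omega
  have hlower : IsLowerSet
      (({c ∈ d.cells | content c = j - i}.image fun c ↦ min c.1 c.2 : Finset ℕ) : Set ℕ) := by
    intro q p hpq hq
    simp only [coe_image, Set.mem_image, mem_coe, mem_filter, mem_cells] at hq ⊢
    simp only [content] at hq ⊢
    obtain ⟨c, ⟨hc, hcont⟩, rfl⟩ := hq
    refine ⟨(c.1 - (min c.1 c.2 - p), c.2 - (min c.1 c.2 - p)), ⟨?_, by omega⟩, by omega⟩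
    exact d.up_left_mem (by omega) (by omega) hc
  rw [← card_image_of_injOn hinj, ← mem_iff_lt_card_of_isLowerSet hlower]
  simp only [mem_image, mem_filter, mem_cells]
  simp only [content]
  constructor
  · exact fun hij ↦ ⟨(i, j), ⟨hij, rfl⟩, rfl⟩
  · rintro ⟨c, ⟨hc, hcont⟩, hmin⟩
    convert hc using 1
    ext <;> dsimp only at * <;> omega

theorem ext_of_card_content {d' : YoungDiagram}
    (h : ∀ k, #{c ∈ d.cells | content c = k} = #{c ∈ d'.cells | content c = k}) : d = d' :=
  SetLike.ext fun c ↦ by rw [mem_iff_min_lt_card_content, mem_iff_min_lt_card_content, h]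

def contentLaurent (k : ℤ) : ℚ[T;T⁻¹] := ∑ c ∈ d.cells, T (k * content c)

theorem contentLaurent_coeff_mul {k : ℤ} (hk : k ≠ 0) (m : ℤ) :
    (d.contentLaurent k).coeff (k * m) = #{c ∈ d.cells | content c = m} := by
  simp only [contentLaurent, AddMonoidAlgebra.coeff_sum, Finsupp.finsetSum_apply, T_apply,
    mul_right_inj' hk, sum_boole]

theorem eq_of_contentLaurent_eq {d' : YoungDiagram} {k : ℤ} (hk : k ≠ 0)
    (h : d.contentLaurent k = d'.contentLaurent k) : d = d' :=
  d.ext_of_card_content fun m ↦ by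
    exact_mod_cast (d.contentLaurent_coeff_mul hk m).symm.trans
      (h ▸ d'.contentLaurent_coeff_mul hk m)

end YoungDiagram

theorem transcendental_s : Transcendental ℚ s :=
  (transcendental_algebraMap_iff (IsFractionRing.injective _ _)).mpr
    (MvPolynomial.transcendental_X ℚ 0)

theorem s_ne_zero : s ≠ 0 := fun h ↦ transcendental_s (h ▸ isAlgebraic_zero)

theorem v_ne_zero : v ≠ 0 :=
  (map_ne_zero_iff _ (IsFractionRing.injective _ _)).mpr (MvPolynomial.X_ne_zero 1)

theorem s_sub_inv_ne_zero : s - s⁻¹ ≠ 0 := by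
  intro h
  refine transcendental_s ⟨X ^ 2 - 1, X_pow_sub_C_ne_zero two_pos 1, ?_⟩
  have : s ^ 2 = 1 :=
    calc s ^ 2 = s * s⁻¹ := by rw [sq, ← sub_eq_zero.mp h]
      _ = 1 := mul_inv_cancel₀ s_ne_zero
  simp [this]

/-- Setting `X 1 = 0` in `MvPolynomial (Fin 2) ℚ` kills the `v²` term. -/
theorem eq_zero_of_aeval_s_mul_v_sq_eq {p q : ℚ[X]} (h : aeval s p * v ^ 2 = aeval s q) :
    p = 0 ∧ q = 0 := by
  let ι := IsScalarTower.toAlgHom ℚ (MvPolynomial (Fin 2) ℚ) F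
  have hpoly : aeval (MvPolynomial.X 0 : MvPolynomial (Fin 2) ℚ) p * MvPolynomial.X 1 ^ 2 =
      aeval (MvPolynomial.X 0) q := by
    apply IsFractionRing.injective (MvPolynomial (Fin 2) ℚ) F
    rw [map_mul, map_pow]
    rwa [show s = ι (MvPolynomial.X 0) from rfl, aeval_algHom_apply, aeval_algHom_apply] at h
  have hq : q = 0 := by
    have := congrArg (MvPolynomial.aeval ![(X : ℚ[X]), 0]) hpoly
    rw [map_mul, map_pow, ← aeval_algHom_apply, ← aeval_algHom_apply, MvPolynomial.aeval_X,
      MvPolynomial.aeval_X] at this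
    simpa using this.symm
  refine ⟨?_, hq⟩
  rw [hq, map_zero, mul_eq_zero, or_iff_left (pow_ne_zero 2 v_ne_zero)] at h
  exact (transcendental_iff_injective.mp transcendental_s).eq_iff.mp (h.trans (map_zero _).symm)

abbrev evalS : ℚ[T;T⁻¹] →+* F := LaurentPolynomial.eval₂ (algebraMap ℚ F) (Units.mk0 s s_ne_zero)

theorem evalS_T (n : ℤ) : evalS (T n) = s ^ n := by
  rw [eval₂_T, Units.val_zpow_eq_zpow_val, Units.val_mk0]

theorem evalS_toLaurent (p : ℚ[X]) : evalS (toLaurent p) = aeval s p := by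
  rw [eval₂_toLaurent, aeval_def, Units.val_mk0]

theorem eq_zero_of_evalS_mul_v_sq_eq {a b : ℚ[T;T⁻¹]} (h : evalS a * v ^ 2 = evalS b) :
    a = 0 ∧ b = 0 := by
  obtain ⟨m, a', ha⟩ := exists_T_pow a
  obtain ⟨n, b', hb⟩ := exists_T_pow b
  have hshift : aeval s (a' * X ^ n) * v ^ 2 = aeval s (b' * X ^ m) := by
    simp only [← evalS_toLaurent, map_mul, ha, hb, toLaurent_X_pow]
    rw [← h]
    ring
  obtain ⟨ha', hb'⟩ := eq_zero_of_aeval_s_mul_v_sq_eq hshift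
  have hTm : a * T m = 0 := by
    rw [← ha, (mul_eq_zero.mp ha').resolve_right (pow_ne_zero _ X_ne_zero), map_zero]
  have hTn : b * T n = 0 := by
    rw [← hb, (mul_eq_zero.mp hb').resolve_right (pow_ne_zero _ X_ne_zero), map_zero]
  exact ⟨(isUnit_T m).mul_left_eq_zero.mp hTm, (isUnit_T n).mul_left_eq_zero.mp hTn⟩

theorem tpair_eq_evalS_contentLaurent (γ μ : YoungDiagram) :
    tpair γ μ = (s - s⁻¹) *
      (-v * evalS (γ.contentLaurent (-2)) + v⁻¹ * evalS (μ.contentLaurent 2)) + δ := by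
  simp only [tpair, YoungDiagram.contentLaurent, map_sum, evalS_T, YoungDiagram.content]

theorem evalS_contentLaurent_sub_mul_v_sq {γ μ γ' μ' : YoungDiagram}
    (h : tpair γ μ = tpair γ' μ') :
    evalS (γ.contentLaurent (-2) - γ'.contentLaurent (-2)) * v ^ 2 =
      evalS (μ.contentLaurent 2 - μ'.contentLaurent 2) := by
  rw [tpair_eq_evalS_contentLaurent, tpair_eq_evalS_contentLaurent, add_left_inj,
    mul_right_inj' s_sub_inv_ne_zero] at h
  have hv := v_ne_zero
  rw [map_sub, map_sub]
  field_simp at h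
  linear_combination -h

theorem tpair_injective (γ μ γ' μ' : YoungDiagram)
    (h : tpair γ μ = tpair γ' μ') : γ = γ' ∧ μ = μ' := by
  obtain ⟨hγ, hμ⟩ := eq_zero_of_evalS_mul_v_sq_eq (evalS_contentLaurent_sub_mul_v_sq h)
  exact ⟨γ.eq_of_contentLaurent_eq (by norm_num) (sub_eq_zero.mp hγ),
    μ.eq_of_contentLaurent_eq (by norm_num) (sub_eq_zero.mp hμ)⟩

end
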